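/- Let K be the tiny Kaplansky superalgebra and J = J(V,ϑ) the Jordan superalgebra of a nondegenerate supersymmetric form on a purely odd 2-dimensional superspace. Then the linear map A(K) → A(J) sending (α₁, γ₁e+μ₁x+ν₁y, γ₂e+μ₂x+ν₂y, α₂) ↦ (α₁, γ₁1−μ₁u+2ν₁v, γ₂1+μ₂u−2ν₂v, α₂) is an isomorphism of superalgebras with superinvolution. -/

import Mathlib

section
variable {k : Type*} [Field k]

/-- The tiny Kaplansky superalgebra `K = ke ⊕ (kx + ky)`, coordinates `(e, x, y)`:
`e² = e`, `ex = (1/2)x`, `ey = (1/2)y`, `xy = e = −yx`, `x² = y² = 0`. -/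
def kapMul (a b : k × k × k) : k × k × k :=
  (a.1 * b.1 + a.2.1 * b.2.2 - a.2.2 * b.2.1,
   (2 : k)⁻¹ * (a.1 * b.2.1 + b.1 * a.2.1),
   (2 : k)⁻¹ * (a.1 * b.2.2 + b.1 * a.2.2))

/-- The supersymmetric trace form of `K`: `⟨e|e⟩ = 1`, `⟨x|y⟩ = 2 = −⟨y|x⟩`. -/
def kapForm (a b : k × k × k) : k :=
  a.1 * b.1 + 2 * a.2.1 * b.2.2 - 2 * a.2.2 * b.2.1

/-- The Jordan superalgebra `J = J(V,ϑ)`, `J₀ = k1`, `J₁ = ku + kv`,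
coordinates `(1, u, v)`: `1` is the unit, `uv = 1 = −vu`, `u² = v² = 0`. -/
def jvMul (a b : k × k × k) : k × k × k :=
  (a.1 * b.1 + a.2.1 * b.2.2 - a.2.2 * b.2.1,
   a.1 * b.2.1 + b.1 * a.2.1,
   a.1 * b.2.2 + b.1 * a.2.2)

/-- The cross product of `J(V,ϑ)` for the normalized trace `t(a,b,c) = a`. -/
def jvCross (x y : k × k × k) : k × k × k :=
  2 • jvMul x y - (3 * x.1) • y - (3 * y.1) • x
    + (9 * x.1 * y.1 - 3 * (jvMul x y).1) • ((1 : k), (0 : k), (0 : k))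

/-- Multiplication of the structurable superalgebra `A(K)`. -/
def aKapMul (z w : k × (k × k × k) × (k × k × k) × k) :
    k × (k × k × k) × (k × k × k) × k :=
  (z.1 * w.1 + 3 * kapForm z.2.1 w.2.2.1,
   z.1 • w.2.1 + w.2.2.2 • z.2.1 + 2 • kapMul z.2.2.1 w.2.2.1,
   w.1 • z.2.2.1 + z.2.2.2 • w.2.2.1 + 2 • kapMul z.2.1 w.2.1,
   z.2.2.2 * w.2.2.2 + 3 * kapForm z.2.2.1 w.2.1)

/-- Multiplication of the structurable superalgebra `A(J(V,ϑ))`. -/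
def aJvMul (z w : k × (k × k × k) × (k × k × k) × k) :
    k × (k × k × k) × (k × k × k) × k :=
  (z.1 * w.1 + 3 * (jvMul z.2.1 w.2.2.1).1,
   z.1 • w.2.1 + w.2.2.2 • z.2.1 + jvCross z.2.2.1 w.2.2.1,
   w.1 • z.2.2.1 + z.2.2.2 • w.2.2.1 + jvCross z.2.1 w.2.1,
   z.2.2.2 * w.2.2.2 + 3 * (jvMul z.2.2.1 w.2.1).1)

/-- The superinvolution `(α, x, y, β) ↦ (β, x, y, α)`. -/
def aSwap (z : k × (k × k × k) × (k × k × k) × k) :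
    k × (k × k × k) × (k × k × k) × k :=
  (z.2.2.2, z.2.1, z.2.2.1, z.1)

/-- The map `A(K) → A(J)`,
`(α₁, γ₁e+μ₁x+ν₁y, γ₂e+μ₂x+ν₂y, α₂) ↦ (α₁, γ₁1−μ₁u+2ν₁v, γ₂1+μ₂u−2ν₂v, α₂)`. -/
def kapToJv (z : k × (k × k × k) × (k × k × k) × k) :
    k × (k × k × k) × (k × k × k) × k :=
  (z.1, (z.2.1.1, - z.2.1.2.1, 2 * z.2.1.2.2),
   (z.2.2.1.1, z.2.2.1.2.1, - (2 * z.2.2.1.2.2)), z.2.2.2)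

end

/-! The map is `id × φ × ψ × id` for the linear bijections `φ, ψ : K → J`,
`φ(γe + μx + νy) = γ1 − μu + 2νv` and `ψ(γe + μx + νy) = γ1 + μu − 2νv`, which differ by the
parity automorphism of `J`. The multiplications of `A(K)` and `A(J)` are assembled from the
same pieces (scalars, the form, and `2ab` resp. the cross product), and `φ, ψ` match these
pieces: `⟨a|b⟩ = t(φ(a)ψ(b)) = t(ψ(a)φ(b))`, `φ(2ab) = ψa × ψb` and `ψ(2ab) = φa × φb`. -/

section
variable {k : Type*} [Field k]

def kapToJvFst : (k × k × k) →ₗ[k] k × k × k where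
  toFun a := (a.1, -a.2.1, 2 * a.2.2)
  map_add' a b := by ext <;> simp only [Prod.fst_add, Prod.snd_add, neg_add, mul_add]
  map_smul' c a := by
    ext <;> simp only [Prod.smul_fst, Prod.smul_snd, smul_eq_mul, RingHom.id_apply, mul_neg,
      mul_left_comm]

def kapToJvSnd : (k × k × k) →ₗ[k] k × k × k where
  toFun a := (a.1, a.2.1, -(2 * a.2.2))
  map_add' a b := by ext <;> simp only [Prod.fst_add, Prod.snd_add, neg_add, mul_add]
  map_smul' c a := by
    ext <;> simp only [Prod.smul_fst, Prod.smul_snd, smul_eq_mul, RingHom.id_apply, mul_neg,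
      mul_left_comm]

theorem kapToJv_eq_prodMap :
    kapToJv (k := k) = Prod.map id (Prod.map kapToJvFst (Prod.map kapToJvSnd id)) :=
  rfl

theorem isLinearMap_kapToJv : IsLinearMap k (kapToJv (k := k)) :=
  (LinearMap.id.prodMap (kapToJvFst.prodMap (kapToJvSnd.prodMap LinearMap.id))).isLinear

theorem bijective_kapToJvFst (hk2 : (2 : k) ≠ 0) : Function.Bijective (kapToJvFst (k := k)) :=
  Function.bijective_id.prodMap
    (neg_bijective.prodMap (IsUnit.isUnit_iff_mulLeft_bijective.mp hk2.isUnit))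

theorem bijective_kapToJvSnd (hk2 : (2 : k) ≠ 0) : Function.Bijective (kapToJvSnd (k := k)) :=
  Function.bijective_id.prodMap (Function.bijective_id.prodMap
    (neg_bijective.comp (IsUnit.isUnit_iff_mulLeft_bijective.mp hk2.isUnit)))

theorem bijective_kapToJv (hk2 : (2 : k) ≠ 0) : Function.Bijective (kapToJv (k := k)) := by
  rw [kapToJv_eq_prodMap]
  exact Function.bijective_id.prodMap ((bijective_kapToJvFst hk2).prodMap
    ((bijective_kapToJvSnd hk2).prodMap Function.bijective_id))

theorem jvMul_kapToJvFst_kapToJvSnd_fst (a b : k × k × k) :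
    (jvMul (kapToJvFst a) (kapToJvSnd b)).1 = kapForm a b := by
  simp only [kapForm, jvMul, kapToJvFst, kapToJvSnd, LinearMap.coe_mk, AddHom.coe_mk]
  ring

theorem jvMul_kapToJvSnd_kapToJvFst_fst (a b : k × k × k) :
    (jvMul (kapToJvSnd a) (kapToJvFst b)).1 = kapForm a b := by
  simp only [kapForm, jvMul, kapToJvFst, kapToJvSnd, LinearMap.coe_mk, AddHom.coe_mk]
  ring

theorem kapToJvFst_two_smul_kapMul (hk2 : (2 : k) ≠ 0) (a b : k × k × k) :
    kapToJvFst (2 • kapMul a b) = jvCross (kapToJvSnd a) (kapToJvSnd b) := by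
  simp only [kapToJvFst, kapToJvSnd, kapMul, jvCross, jvMul, LinearMap.coe_mk, AddHom.coe_mk,
    Prod.smul_mk, smul_eq_mul, nsmul_eq_mul, Nat.cast_ofNat, Prod.mk_sub_mk, Prod.mk_add_mk]
  ext <;> field_simp <;> ring

theorem kapToJvSnd_two_smul_kapMul (hk2 : (2 : k) ≠ 0) (a b : k × k × k) :
    kapToJvSnd (2 • kapMul a b) = jvCross (kapToJvFst a) (kapToJvFst b) := by
  simp only [kapToJvFst, kapToJvSnd, kapMul, jvCross, jvMul, LinearMap.coe_mk, AddHom.coe_mk,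
    Prod.smul_mk, smul_eq_mul, nsmul_eq_mul, Nat.cast_ofNat, Prod.mk_sub_mk, Prod.mk_add_mk]
  ext <;> field_simp <;> ring

theorem kapToJv_aKapMul (hk2 : (2 : k) ≠ 0) (z w : k × (k × k × k) × (k × k × k) × k) :
    kapToJv (aKapMul z w) = aJvMul (kapToJv z) (kapToJv w) := by
  simp only [kapToJv_eq_prodMap, aKapMul, aJvMul, Prod.map_apply, Prod.map_fst, Prod.map_snd,
    id, map_add, map_smul, jvMul_kapToJvFst_kapToJvSnd_fst, jvMul_kapToJvSnd_kapToJvFst_fst,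
    kapToJvFst_two_smul_kapMul hk2, kapToJvSnd_two_smul_kapMul hk2]

theorem kapToJv_aSwap (z : k × (k × k × k) × (k × k × k) × k) :
    kapToJv (aSwap z) = aSwap (kapToJv z) :=
  rfl

end

theorem kaplansky_to_Jv_isomorphism_general
    (k : Type*) [Field k] (hk2 : (2 : k) ≠ 0) :
    IsLinearMap k (kapToJv (k := k)) ∧
    Function.Bijective (kapToJv (k := k)) ∧
    (∀ z w : k × (k × k × k) × (k × k × k) × k,
      kapToJv (aKapMul z w) = aJvMul (kapToJv z) (kapToJv w)) ∧
    (∀ z : k × (k × k × k) × (k × k × k) × k,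
      kapToJv (aSwap z) = aSwap (kapToJv z)) :=
  ⟨isLinearMap_kapToJv, bijective_kapToJv hk2, kapToJv_aKapMul hk2, kapToJv_aSwap⟩

/-- The linear map `A(K) → A(J(V,ϑ))` sending
`(α₁, γ₁e+μ₁x+ν₁y, γ₂e+μ₂x+ν₂y, α₂)` to `(α₁, γ₁1−μ₁u+2ν₁v, γ₂1+μ₂u−2ν₂v, α₂)`
is an isomorphism of superalgebras with superinvolution, where `K` is the tiny
Kaplansky superalgebra and `J(V,ϑ)` the Jordan superalgebra of a nondegenerate
supersymmetric form on a purely odd two-dimensional superspace. -/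
theorem kaplansky_to_Jv_isomorphism
    (k : Type*) [Field k] (hk2 : (2 : k) ≠ 0) (hk3 : (3 : k) ≠ 0) :
    IsLinearMap k (kapToJv (k := k)) ∧
    Function.Bijective (kapToJv (k := k)) ∧
    (∀ z w : k × (k × k × k) × (k × k × k) × k,
      kapToJv (aKapMul z w) = aJvMul (kapToJv z) (kapToJv w)) ∧
    (∀ z : k × (k × k × k) × (k × k × k) × k,
      kapToJv (aSwap z) = aSwap (kapToJv z)) :=
  kaplansky_to_Jv_isomorphism_general k hk2
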